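/- Optimal recovery of the solution operator of a Volterra equation of the second kind in L¹: Let [a,b] ⊂ ℝ with Lebesgue measure μ, let k : [a,b]² → ℝ be continuous and nonnegative, let k_1 := k, k_{n}(t,s) := ∫_s^t k(t,u) k_{n−1}(u,s) du for n ≥ 2, and Γ(t,s) := Σ_{n=1}^∞ k_n(t,s) (the resolvent kernel; the series converges for a ≤ s ≤ t ≤ b). Define A f(t) := f(t) + ∫_a^t Γ(t,s) f(s) ds, mapping H^ω([a,b]) into L¹([a,b]). Then Φ := A ∘ L_{ω,Q,e} is an optimal method of recovery of A on H^ω([a,b]) based on information I_Q with U_e-error, and E(A; H^ω([a,b]); I_Q; U_e) = ∫_a^b ( 1 + ∫_s^b Γ(t,s) dt ) τ_{ω,Q,e}(s) ds. -/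

import Mathlib

/-!
Upper bound: on the Voronoi cell of `q_j`, for `f ∈ H^ω` and admissible data `z`,
`|f t - z_j| ≤ |f t - f q_j| + |f q_j - z_j| ≤ ω |t - q_j| + e_j = τ t`. The resolvent kernel is
nonnegative, so `A` is monotone and `|A f - A (L z)| ≤ A τ` pointwise. Lower bound: `τ` and `-τ`
both lie in `H^ω` and are compatible with the data `z = 0`, so every method errs by at least
`‖A τ‖₁` on one of them. Fubini on the triangle `a ≤ s ≤ t ≤ b` then evaluates `‖A τ‖₁`.
-/

open MeasureTheory intervalIntegral
open scoped ENNReal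

/-- The function `τ_{ω,Q,e}(t) = min_j (e_j + ω(|t − q_j|))`. -/
noncomputable def tauOR {M : Type*} [MetricSpace M] (ω : ℝ → ℝ) {n : ℕ}
    (q : Fin n → M) (e : Fin n → ℝ) (t : M) : ℝ :=
  ⨅ j, (e j + ω (dist t (q j)))

/-- The method of recovery `L_{ω,Q,e}` built on the generalized Voronoi cells:
`L_{ω,Q,e} z` equals `z_j` on the cell `Π_j`. -/
noncomputable def LmethOR {M : Type*} [MetricSpace M] (ω : ℝ → ℝ) {n : ℕ}
    (q : Fin n → M) (e : Fin n → ℝ) (z : Fin n → ℝ) (t : M) : ℝ :=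
  haveI := Classical.dec
  if h : (Finset.univ.filter fun j => tauOR ω q e t = e j + ω (dist t (q j))).Nonempty
  then z ((Finset.univ.filter fun j => tauOR ω q e t = e j + ω (dist t (q j))).min' h)
  else 0

/-- The iterated kernels of a Volterra integral equation of the second kind:
`k_1 = k`, `k_{n+1}(t,s) = ∫_s^t k(t,u) k_n(u,s) du`. -/
noncomputable def volterraIter (k : ℝ → ℝ → ℝ) : ℕ → ℝ → ℝ → ℝ
  | 0 => k
  | (nn + 1) => fun t s => ∫ u in s..t, k t u * volterraIter k nn u s

/-- The resolvent kernel `Γ(t,s) = Σ_{n≥1} k_n(t,s)` of a Volterra equation. -/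
noncomputable def volterraResolvent (k : ℝ → ℝ → ℝ) (t s : ℝ) : ℝ :=
  ∑' nn : ℕ, volterraIter k nn t s

open Set Function Filter
open scoped Nat Interval Topology

theorem continuous_volterraIter {k : ℝ → ℝ → ℝ} (hk : Continuous (uncurry k)) (m : ℕ) :
    Continuous (uncurry (volterraIter k m)) := by
  induction m with
  | zero => exact hk
  | succ m ih =>
    have hF : Continuous fun q : (ℝ × ℝ) × ℝ => k q.1.1 q.2 * volterraIter k m q.2 q.1.2 :=
      (hk.comp (continuous_fst.fst.prodMk continuous_snd)).mul
        (ih.comp (continuous_snd.prodMk continuous_fst.snd))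
    have hint (p : ℝ × ℝ) (c d : ℝ) :
        IntervalIntegrable (fun u => k p.1 u * volterraIter k m u p.2) volume c d :=
      (hF.comp (continuous_const.prodMk continuous_id)).intervalIntegrable c d
    have hsplit : uncurry (volterraIter k (m + 1)) = fun p =>
        (∫ u in (0 : ℝ)..p.1, k p.1 u * volterraIter k m u p.2) -
          ∫ u in (0 : ℝ)..p.2, k p.1 u * volterraIter k m u p.2 := by
      ext p
      exact (integral_interval_sub_left (hint p 0 p.1) (hint p 0 p.2)).symm
    rw [hsplit]
    exact (continuous_parametric_intervalIntegral_of_continuous hF continuous_fst).sub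
      (continuous_parametric_intervalIntegral_of_continuous hF continuous_snd)

theorem abs_volterraIter_le {k : ℝ → ℝ → ℝ} {α β c : ℝ}
    (hk : ∀ x ∈ Icc α β, ∀ y ∈ Icc α β, |k x y| ≤ c) (m : ℕ) {t s : ℝ}
    (ht : t ∈ Icc α β) (hs : s ∈ Icc α β) :
    |volterraIter k m t s| ≤ c * ((c * |t - s|) ^ m / m !) := by
  induction m generalizing t with
  | zero => simpa [volterraIter] using hk t ht s hs
  | succ m ih =>
    have hc : 0 ≤ c := (abs_nonneg _).trans (hk t ht s hs)
    have hsub : Ι s t ⊆ Icc α β := uIoc_subset_uIcc.trans (uIcc_subset_Icc hs ht)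
    calc |volterraIter k (m + 1) t s|
        ≤ ∫ u in Ι s t, c ^ (m + 2) / m ! * |u - s| ^ m := by
          rw [← Real.norm_eq_abs, volterraIter, intervalIntegral.norm_intervalIntegral_eq]
          refine MeasureTheory.norm_integral_le_of_norm_le
            (Continuous.integrableOn_uIoc (by fun_prop))
            ((ae_restrict_iff' measurableSet_uIoc).2 (Eventually.of_forall fun u hu => ?_))
          rw [Real.norm_eq_abs, abs_mul]
          calc |k t u| * |volterraIter k m u s| ≤ c * (c * ((c * |u - s|) ^ m / m !)) :=
                mul_le_mul (hk t ht u (hsub hu)) (ih (hsub hu)) (abs_nonneg _) hc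
            _ = c ^ (m + 2) / m ! * |u - s| ^ m := by ring
      _ = c * ((c * |t - s|) ^ (m + 1) / (m + 1)!) := by
          rw [MeasureTheory.integral_const_mul, integral_pow_abs_sub_uIoc, Nat.factorial_succ]
          push_cast
          field_simp
          ring

theorem continuous_volterraResolvent {k : ℝ → ℝ → ℝ} (hk : Continuous (uncurry k)) :
    Continuous (uncurry (volterraResolvent k)) := by
  rw [continuous_iff_continuousAt]
  rintro ⟨t₀, s₀⟩
  set R := |t₀| + |s₀| + 1
  have hR : 0 < R := by positivity
  obtain ⟨c, hc⟩ := (isCompact_Icc.prod isCompact_Icc).exists_bound_of_continuousOn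
    (s := Icc (-R) R ×ˢ Icc (-R) R) hk.continuousOn
  have hkc : ∀ x ∈ Icc (-R) R, ∀ y ∈ Icc (-R) R, |k x y| ≤ c := fun x hx y hy => hc (x, y) ⟨hx, hy⟩
  have hc0 : 0 ≤ c := (abs_nonneg _).trans (hkc 0 ⟨by linarith, hR.le⟩ 0 ⟨by linarith, hR.le⟩)
  have hbox : ContinuousOn (uncurry (volterraResolvent k)) (Icc (-R) R ×ˢ Icc (-R) R) := by
    refine continuousOn_tsum (fun m => (continuous_volterraIter hk m).continuousOn)
      ((Real.summable_pow_div_factorial (c * (2 * R))).mul_left c) fun m p hp => ?_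
    refine (abs_volterraIter_le hkc m hp.1 hp.2).trans ?_
    have : |p.1 - p.2| ≤ 2 * R := by
      rw [abs_le]; constructor <;> linarith [hp.1.1, hp.1.2, hp.2.1, hp.2.2]
    gcongr
  refine hbox.continuousAt (prod_mem_nhds (Icc_mem_nhds ?_ ?_) (Icc_mem_nhds ?_ ?_)) <;>
    linarith [neg_abs_le t₀, le_abs_self t₀, neg_abs_le s₀, le_abs_self s₀, abs_nonneg t₀,
      abs_nonneg s₀]

theorem volterraResolvent_nonneg {k : ℝ → ℝ → ℝ} (hk : ∀ t s, 0 ≤ k t s) {t s : ℝ}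
    (hst : s ≤ t) : 0 ≤ volterraResolvent k t s := by
  have hiter : ∀ m {t s : ℝ}, s ≤ t → 0 ≤ volterraIter k m t s := by
    intro m
    induction m with
    | zero => exact fun _ => hk _ _
    | succ m ih =>
      exact fun hst => intervalIntegral.integral_nonneg hst fun u hu =>
        mul_nonneg (hk _ _) (ih hu.1)
  exact tsum_nonneg fun m => hiter m hst

section Voronoi

variable {M : Type*} [MetricSpace M] {ω : ℝ → ℝ} {n : ℕ} {q : Fin n → M} {e : Fin n → ℝ}

/-- The class `H^ω(s)`. -/
def modulusClass (ω : ℝ → ℝ) (s : Set M) : Set (M → ℝ) :=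
  {x | ∀ t ∈ s, ∀ t' ∈ s, |x t - x t'| ≤ ω (dist t t')}

theorem neg_mem_modulusClass {s : Set M} {f : M → ℝ} (hf : f ∈ modulusClass ω s) :
    -f ∈ modulusClass ω s := fun t ht t' ht' => by
  simpa only [Pi.neg_apply, neg_sub_neg, abs_sub_comm] using hf t ht t' ht'

theorem continuousOn_of_mem_modulusClass (hω0 : ω 0 = 0) (hω : ContinuousWithinAt ω (Ici 0) 0)
    {s : Set M} {f : M → ℝ} (hf : f ∈ modulusClass ω s) : ContinuousOn f s := by
  intro x hx
  rw [ContinuousWithinAt, tendsto_iff_dist_tendsto_zero]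
  have hdist : Tendsto (fun t => dist t x) (𝓝[s] x) (𝓝[Ici 0] 0) := by
    refine tendsto_nhdsWithin_iff.2 ⟨?_, Eventually.of_forall fun _ => dist_nonneg⟩
    simpa using ((continuous_id.dist (continuous_const (y := x))).tendsto x).mono_left
      nhdsWithin_le_nhds
  have hω' : Tendsto (fun t => ω (dist t x)) (𝓝[s] x) (𝓝 0) := hω0 ▸ hω.tendsto.comp hdist
  refine squeeze_zero' (Eventually.of_forall fun _ => dist_nonneg) ?_ hω'
  filter_upwards [self_mem_nhdsWithin] with t ht
  exact hf t ht x hx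

variable (ω q e) in
theorem tauOR_le (t : M) (j : Fin n) : tauOR ω q e t ≤ e j + ω (dist t (q j)) :=
  ciInf_le (Finite.bddBelow_range _) j

variable [NeZero n]

theorem tauOR_nonneg (he : ∀ j, 0 ≤ e j) (hω : ∀ r, 0 ≤ r → 0 ≤ ω r) (t : M) :
    0 ≤ tauOR ω q e t :=
  le_ciInf fun j => add_nonneg (he j) (hω _ dist_nonneg)

theorem abs_tauOR_node_le (hω0 : ω 0 = 0) (he : ∀ j, 0 ≤ e j) (hω : ∀ r, 0 ≤ r → 0 ≤ ω r)
    (j : Fin n) : |tauOR ω q e (q j)| ≤ e j := by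
  rw [abs_of_nonneg (tauOR_nonneg he hω _)]
  simpa [hω0] using tauOR_le ω q e (q j) j

theorem tauOR_mem_modulusClass (hω_mono : MonotoneOn ω (Ici 0))
    (hω_subadd : ∀ r r' : ℝ, 0 ≤ r → 0 ≤ r' → ω (r + r') ≤ ω r + ω r') (s : Set M) :
    tauOR ω q e ∈ modulusClass ω s := by
  have key (x y : M) : tauOR ω q e x - tauOR ω q e y ≤ ω (dist x y) := by
    suffices tauOR ω q e x - ω (dist x y) ≤ tauOR ω q e y by linarith
    refine le_ciInf fun j => ?_
    have : ω (dist x (q j)) ≤ ω (dist x y) + ω (dist y (q j)) :=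
      (hω_mono dist_nonneg (add_nonneg dist_nonneg dist_nonneg) (dist_triangle x y (q j))).trans
        (hω_subadd _ _ dist_nonneg dist_nonneg)
    linarith [tauOR_le ω q e x j]
  intro t _ t' _
  exact abs_sub_le_iff.2 ⟨key t t', dist_comm t t' ▸ key t' t⟩

variable (ω q e) in
theorem exists_tauOR_eq (t : M) : ∃ j, tauOR ω q e t = e j + ω (dist t (q j)) :=
  exists_eq_ciInf_of_finite.imp fun _ hj => hj.symm

variable (ω q e) in
theorem exists_LmethOR_eq (z : Fin n → ℝ) (t : M) :
    ∃ j, LmethOR ω q e z t = z j ∧ tauOR ω q e t = e j + ω (dist t (q j)) := by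
  classical
  have hne : (Finset.univ.filter fun j => tauOR ω q e t = e j + ω (dist t (q j))).Nonempty :=
    let ⟨j, hj⟩ := exists_tauOR_eq ω q e t
    Finset.filter_nonempty_iff.2 ⟨j, Finset.mem_univ _, hj⟩
  refine ⟨_, ?_, (Finset.mem_filter.1 (Finset.min'_mem _ hne)).2⟩
  rw [LmethOR, dif_pos hne]

theorem abs_LmethOR_le_sum (z : Fin n → ℝ) (t : M) : |LmethOR ω q e z t| ≤ ∑ j, |z j| := by
  obtain ⟨j, hj, -⟩ := exists_LmethOR_eq ω q e z t
  rw [hj]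
  exact Finset.single_le_sum (fun i _ => abs_nonneg (z i)) (Finset.mem_univ j)

theorem abs_sub_LmethOR_le {s : Set M} (hq : ∀ j, q j ∈ s) {f : M → ℝ}
    (hf : f ∈ modulusClass ω s) {z : Fin n → ℝ} (hz : ∀ j, |z j - f (q j)| ≤ e j) {t : M}
    (ht : t ∈ s) : |f t - LmethOR ω q e z t| ≤ tauOR ω q e t := by
  obtain ⟨j, hj, hτ⟩ := exists_LmethOR_eq ω q e z t
  rw [hj, hτ]
  calc |f t - z j| ≤ |f t - f (q j)| + |f (q j) - z j| := abs_sub_le _ _ _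
    _ ≤ ω (dist t (q j)) + e j := add_le_add (hf t ht (q j) (hq j)) (abs_sub_comm (z j) _ ▸ hz j)
    _ = e j + ω (dist t (q j)) := add_comm _ _

theorem measurable_LmethOR [MeasurableSpace M] [OpensMeasurableSpace M]
    (hω : ContinuousOn ω (Ici 0)) (z : Fin n → ℝ) : Measurable (LmethOR ω q e z) := by
  classical
  set P : Fin n → M → Prop := fun j t => tauOR ω q e t = e j + ω (dist t (q j))
  have hcell (j : Fin n) : Continuous fun t => e j + ω (dist t (q j)) :=
    continuous_const.add (hω.comp_continuous (continuous_id.dist continuous_const)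
      fun _ => dist_nonneg)
  have hP (j : Fin n) : Measurable (P j) :=
    measurableSet_setOfPred.1 <| measurableSet_eq_fun
      (Measurable.iInf fun i => (hcell i).measurable) (hcell j).measurable
  have hne (t : M) : (Finset.univ.filter (P · t)).Nonempty :=
    let ⟨j, hj⟩ := exists_tauOR_eq ω q e t
    Finset.filter_nonempty_iff.2 ⟨j, Finset.mem_univ _, hj⟩
  set idx : M → Fin n := fun t => (Finset.univ.filter (P · t)).min' (hne t)
  have hidx (t : M) (j : Fin n) : idx t = j ↔ P j t ∧ ∀ i, P i t → j ≤ i := by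
    have h := Finset.isLeast_min' _ (hne t)
    refine ⟨fun hj => hj ▸ ⟨(Finset.mem_filter.1 h.1).2, fun i hi => h.2 ?_⟩, fun hj => h.unique ?_⟩
    · exact Finset.mem_filter.2 ⟨Finset.mem_univ _, hi⟩
    · exact ⟨Finset.mem_filter.2 ⟨Finset.mem_univ _, hj.1⟩,
        fun i hi => hj.2 i (Finset.mem_filter.1 hi).2⟩
  have hL : LmethOR ω q e z = fun t => z (idx t) := by
    ext t
    rw [LmethOR, dif_pos (hne t)]
  rw [hL]
  refine (measurable_from_top.comp (measurable_to_countable' fun j => ?_))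
  simp_rw [preimage, mem_singleton_iff, hidx]
  exact measurableSet_setOfPred.2
    ((hP j).and (Measurable.forall fun i => (hP i).imp measurable_const))

theorem integrableOn_LmethOR [MeasurableSpace M] [OpensMeasurableSpace M] {μ : Measure M}
    (hω : ContinuousOn ω (Ici 0)) (z : Fin n → ℝ) {s : Set M} (hs : μ s ≠ ∞) :
    IntegrableOn (LmethOR ω q e z) s μ :=
  Measure.integrableOn_of_bounded hs (measurable_LmethOR hω z).aestronglyMeasurable
    (ae_of_all _ fun t => abs_LmethOR_le_sum z t)

end Voronoi

noncomputable def volterraOp (Γ : ℝ → ℝ → ℝ) (a : ℝ) (f : ℝ → ℝ) (t : ℝ) : ℝ :=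
  f t + ∫ s in a..t, Γ t s * f s

section VolterraOp

variable {Γ : ℝ → ℝ → ℝ} {a b : ℝ} {f : ℝ → ℝ}

theorem volterraOp_neg : volterraOp Γ a (-f) = -volterraOp Γ a f := by
  ext t
  simp only [volterraOp, Pi.neg_apply, mul_neg, intervalIntegral.integral_neg]
  ring

theorem volterraOp_nonneg (hΓnn : ∀ t s, s ≤ t → 0 ≤ Γ t s) {t : ℝ} (hat : a ≤ t)
    (hf : ∀ s ∈ Icc a t, 0 ≤ f s) : 0 ≤ volterraOp Γ a f t :=
  add_nonneg (hf t ⟨hat, le_rfl⟩) <| intervalIntegral.integral_nonneg hat fun s hs =>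
    mul_nonneg (hΓnn _ _ hs.2) (hf s hs)

theorem integral_indicator_le_mul_left {t : ℝ} (ht : t ∈ Icc a b) :
    ∫ s in Icc a b, {p : ℝ × ℝ | p.2 ≤ p.1}.indicator (fun p => Γ p.1 p.2 * f p.2) (t, s) =
      ∫ s in a..t, Γ t s * f s := by
  have h : ∀ s, {p : ℝ × ℝ | p.2 ≤ p.1}.indicator (fun p => Γ p.1 p.2 * f p.2) (t, s) =
      (Iic t).indicator (fun s => Γ t s * f s) s := fun s => by
    simp [indicator_apply]
  have hset : Icc a b ∩ Iic t = Icc a t :=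
    Set.ext fun s => ⟨fun h => ⟨h.1.1, h.2⟩, fun h => ⟨⟨h.1, h.2.trans ht.2⟩, h.2⟩⟩
  simp_rw [h]
  rw [setIntegral_indicator measurableSet_Iic, hset, intervalIntegral.integral_of_le ht.1,
    integral_Icc_eq_integral_Ioc]

theorem integral_indicator_le_mul_right {s : ℝ} (hs : s ∈ Icc a b) :
    ∫ t in Icc a b, {p : ℝ × ℝ | p.2 ≤ p.1}.indicator (fun p => Γ p.1 p.2 * f p.2) (t, s) =
      (∫ t in s..b, Γ t s) * f s := by
  have h : ∀ t, {p : ℝ × ℝ | p.2 ≤ p.1}.indicator (fun p => Γ p.1 p.2 * f p.2) (t, s) =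
      (Ici s).indicator (fun t => Γ t s * f s) t := fun t => by
    simp [indicator_apply]
  have hset : Icc a b ∩ Ici s = Icc s b :=
    Set.ext fun t => ⟨fun h => ⟨h.2, h.1.2⟩, fun h => ⟨⟨hs.1.trans h.1, h.2⟩, h.1⟩⟩
  simp_rw [h]
  rw [setIntegral_indicator measurableSet_Ici, hset, intervalIntegral.integral_of_le hs.2,
    integral_Icc_eq_integral_Ioc, MeasureTheory.integral_mul_const]

variable (hΓ : Continuous (uncurry Γ))
include hΓ

theorem intervalIntegrable_mul_of_integrableOn (hf : IntegrableOn f (Icc a b)) {t : ℝ}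
    (ht : t ∈ Icc a b) : IntervalIntegrable (fun s => Γ t s * f s) volume a t :=
  (intervalIntegrable_iff_integrableOn_Icc_of_le ht.1).2 <|
    (hf.mono_set (Icc_subset_Icc_right ht.2)).continuousOn_mul (hΓ.uncurry_left t).continuousOn
      isCompact_Icc

theorem integrable_indicator_le_mul (hf : IntegrableOn f (Icc a b)) :
    Integrable ({p : ℝ × ℝ | p.2 ≤ p.1}.indicator fun p => Γ p.1 p.2 * f p.2)
      ((volume.restrict (Icc a b)).prod (volume.restrict (Icc a b))) := by
  obtain ⟨C, hC⟩ := (isCompact_Icc.prod isCompact_Icc).exists_bound_of_continuousOn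
    (s := Icc a b ×ˢ Icc a b) hΓ.continuousOn
  refine Integrable.indicator ?_ (measurableSet_le measurable_snd measurable_fst)
  refine ((integrable_const C).mul_prod hf.norm).mono'
    (hΓ.aestronglyMeasurable.mul hf.1.comp_snd) ?_
  rw [Measure.prod_restrict]
  filter_upwards [ae_restrict_mem (measurableSet_Icc.prod measurableSet_Icc)] with p hp
  rw [norm_mul]
  exact mul_le_mul_of_nonneg_right (hC p hp) (norm_nonneg _)

theorem integrableOn_volterraOp (hf : IntegrableOn f (Icc a b)) :
    IntegrableOn (volterraOp Γ a f) (Icc a b) :=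
  hf.add <| (integrable_indicator_le_mul hΓ hf).integral_prod_left.congr <|
    ae_restrict_of_forall_mem measurableSet_Icc fun _ ht => integral_indicator_le_mul_left ht

theorem integral_volterraOp (hab : a ≤ b) (hf : IntegrableOn f (Icc a b)) :
    ∫ t in a..b, volterraOp Γ a f t = ∫ s in a..b, (1 + ∫ t in s..b, Γ t s) * f s := by
  set H := {p : ℝ × ℝ | p.2 ≤ p.1}.indicator fun p => Γ p.1 p.2 * f p.2
  have hH : Integrable H ((volume.restrict (Icc a b)).prod (volume.restrict (Icc a b))) :=
    integrable_indicator_le_mul hΓ hf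
  simp only [intervalIntegral.integral_of_le hab, ← integral_Icc_eq_integral_Ioc]
  calc ∫ t in Icc a b, volterraOp Γ a f t
      = (∫ t in Icc a b, f t) + ∫ t in Icc a b, ∫ s in Icc a b, H (t, s) := by
        rw [← integral_add hf hH.integral_prod_left]
        exact setIntegral_congr_fun measurableSet_Icc fun t ht => by
          rw [volterraOp, integral_indicator_le_mul_left ht]
    _ = (∫ s in Icc a b, f s) + ∫ s in Icc a b, ∫ t in Icc a b, H (t, s) := by
        rw [integral_integral_swap (f := fun t s => H (t, s)) hH]
    _ = ∫ s in Icc a b, (1 + ∫ t in s..b, Γ t s) * f s := by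
        rw [← integral_add hf hH.integral_prod_right]
        refine setIntegral_congr_fun measurableSet_Icc fun s hs => ?_
        rw [integral_indicator_le_mul_right hs]
        ring

theorem abs_volterraOp_sub_le (hΓnn : ∀ t s, s ≤ t → 0 ≤ Γ t s) {g w : ℝ → ℝ}
    (hf : IntegrableOn f (Icc a b)) (hg : IntegrableOn g (Icc a b))
    (hw : IntegrableOn w (Icc a b)) (hfg : ∀ s ∈ Icc a b, |f s - g s| ≤ w s) {t : ℝ}
    (ht : t ∈ Icc a b) : |volterraOp Γ a f t - volterraOp Γ a g t| ≤ volterraOp Γ a w t := by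
  have hfg' := (intervalIntegrable_mul_of_integrableOn hΓ hf ht).sub
    (intervalIntegrable_mul_of_integrableOn hΓ hg ht)
  calc |volterraOp Γ a f t - volterraOp Γ a g t|
      = |(f t - g t) + ∫ s in a..t, (Γ t s * f s - Γ t s * g s)| := by
        rw [volterraOp, volterraOp, intervalIntegral.integral_sub
          (intervalIntegrable_mul_of_integrableOn hΓ hf ht)
          (intervalIntegrable_mul_of_integrableOn hΓ hg ht)]
        ring_nf
    _ ≤ |f t - g t| + ∫ s in a..t, |Γ t s * f s - Γ t s * g s| :=
        (abs_add_le _ _).trans <|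
          add_le_add_right (intervalIntegral.abs_integral_le_integral_abs ht.1) _
    _ ≤ w t + ∫ s in a..t, Γ t s * w s := by
        refine add_le_add (hfg t ht) (intervalIntegral.integral_mono_on ht.1 hfg'.abs
          (intervalIntegrable_mul_of_integrableOn hΓ hw ht) fun s hs => ?_)
        rw [← mul_sub, abs_mul, abs_of_nonneg (hΓnn _ _ hs.2)]
        exact mul_le_mul_of_nonneg_left (hfg s ⟨hs.1, hs.2.trans ht.2⟩) (hΓnn _ _ hs.2)

end VolterraOp

theorem eLpNorm_one_restrict_Icc_of_nonneg {a b : ℝ} {g : ℝ → ℝ} (hab : a ≤ b)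
    (hg : IntegrableOn g (Icc a b)) (hg0 : ∀ t ∈ Icc a b, 0 ≤ g t) :
    eLpNorm g 1 (volume.restrict (Icc a b)) = ENNReal.ofReal (∫ t in a..b, g t) := by
  rw [eLpNorm_one_eq_lintegral_enorm, ← ofReal_integral_norm_eq_lintegral_enorm hg,
    intervalIntegral.integral_of_le hab, ← integral_Icc_eq_integral_Ioc]
  exact congrArg _ <|
    setIntegral_congr_fun measurableSet_Icc fun t ht => Real.norm_of_nonneg (hg0 t ht)

noncomputable def recoveryError {X : Type*} [MeasurableSpace X] {n : ℕ}
    (A : (X → ℝ) → X → ℝ) (W : Set (X → ℝ)) (q : Fin n → X) (e : Fin n → ℝ) (μ : Measure X)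
    (Φ : (Fin n → ℝ) → X → ℝ) : ℝ≥0∞ :=
  ⨆ f ∈ W, ⨆ z : Fin n → ℝ, ⨆ (_ : ∀ j, |z j - f (q j)| ≤ e j),
    eLpNorm (fun t => A f t - Φ z t) 1 μ

theorem eLpNorm_le_recoveryError {X : Type*} [MeasurableSpace X] {n : ℕ}
    {A : (X → ℝ) → X → ℝ} {W : Set (X → ℝ)} {q : Fin n → X} {e : Fin n → ℝ} {μ : Measure X}
    {Φ : (Fin n → ℝ) → X → ℝ} {g : X → ℝ} (hA : A (-g) = -A g) (hg : g ∈ W) (hg' : -g ∈ W)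
    (hgq : ∀ j, |g (q j)| ≤ e j) (hAg : AEStronglyMeasurable (A g) μ)
    (hΦ : AEStronglyMeasurable (Φ 0) μ) : eLpNorm (A g) 1 μ ≤ recoveryError A W q e μ Φ := by
  have hle {f : X → ℝ} (hf : f ∈ W) (hfq : ∀ j, |f (q j)| ≤ e j) :
      eLpNorm (A f - Φ 0) 1 μ ≤ recoveryError A W q e μ Φ :=
    le_iSup₂_of_le f hf <| le_iSup₂_of_le (0 : Fin n → ℝ) (by simpa using hfq) le_rfl
  have h₁ := hle hg hgq
  have h₂ := hA ▸ hle hg' (by simpa using hgq)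
  have h₂' : (2 : ℝ) • A g = (A g - Φ 0) - (-A g - Φ 0) := by
    ext; simp only [Pi.smul_apply, Pi.sub_apply, Pi.neg_apply, smul_eq_mul]; ring
  have key : 2 * eLpNorm (A g) 1 μ ≤ 2 * recoveryError A W q e μ Φ := by
    calc 2 * eLpNorm (A g) 1 μ = eLpNorm ((2 : ℝ) • A g) 1 μ := by
          rw [eLpNorm_const_smul, Real.enorm_of_nonneg zero_le_two, ENNReal.ofReal_ofNat]
      _ ≤ eLpNorm (A g - Φ 0) 1 μ + eLpNorm (-A g - Φ 0) 1 μ := by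
          rw [h₂']; exact eLpNorm_sub_le (hAg.sub hΦ) (hAg.neg.sub hΦ) le_rfl
      _ ≤ 2 * recoveryError A W q e μ Φ := by rw [two_mul]; exact add_le_add h₁ h₂
  exact (ENNReal.mul_le_mul_iff_right two_ne_zero ENNReal.ofNat_ne_top).1 key

theorem optimal_recovery_volterra_general
    (a b : ℝ)
    (k : ℝ → ℝ → ℝ) (hk_cont : Continuous fun p : ℝ × ℝ => k p.1 p.2)
    (hk_nonneg : ∀ t s, 0 ≤ k t s)
    (ω : ℝ → ℝ) (hω0 : ω 0 = 0)
    (hω_cont : ContinuousOn ω (Set.Ici 0))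
    (hω_mono : MonotoneOn ω (Set.Ici 0))
    (hω_subadd : ∀ s t : ℝ, 0 ≤ s → 0 ≤ t → ω (s + t) ≤ ω s + ω t)
    {n : ℕ} (hn : 0 < n) (q : Fin n → ℝ) (hq : ∀ j, q j ∈ Set.Icc a b)
    (e : Fin n → ℝ) (he : ∀ j, 0 ≤ e j) :
    let Γ : ℝ → ℝ → ℝ := volterraResolvent k
    -- the solution operator of the Volterra equation `x(t) = f(t) + ∫_a^t k(t,s) x(s) ds`
    let A : (ℝ → ℝ) → ℝ → ℝ := fun f t => f t + ∫ s in a..t, Γ t s * f s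
    let W : Set (ℝ → ℝ) :=
      {x | ∀ t ∈ Set.Icc a b, ∀ t' ∈ Set.Icc a b, |x t - x t'| ≤ ω (dist t t')}
    let μab : Measure ℝ := volume.restrict (Set.Icc a b)
    let Err : ((Fin n → ℝ) → ℝ → ℝ) → ℝ≥0∞ := fun Φ =>
      ⨆ f ∈ W, ⨆ z : Fin n → ℝ, ⨆ (_ : ∀ j, |z j - f (q j)| ≤ e j),
        eLpNorm (fun t => A f t - Φ z t) 1 μab
    let Φ₀ : (Fin n → ℝ) → ℝ → ℝ := fun z => A (LmethOR ω q e z)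
    (⨅ Φ : {Φ : (Fin n → ℝ) → ℝ → ℝ // ∀ z, MemLp (Φ z) 1 μab}, Err Φ.1) = Err Φ₀ ∧
      Err Φ₀ = ENNReal.ofReal (∫ s in a..b, (1 + ∫ t in s..b, Γ t s) * tauOR ω q e s) := by
  intro Γ A W μab Err Φ₀
  have : NeZero n := ⟨hn.ne'⟩
  have hab : a ≤ b := (hq 0).1.trans (hq 0).2
  have hΓ : Continuous (uncurry Γ) := continuous_volterraResolvent hk_cont
  have hΓnn (t s : ℝ) : s ≤ t → 0 ≤ Γ t s := volterraResolvent_nonneg hk_nonneg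
  have hω_nonneg (r : ℝ) (hr : 0 ≤ r) : 0 ≤ ω r := hω0 ▸ hω_mono self_mem_Ici hr hr
  have hW {f : ℝ → ℝ} (hf : f ∈ W) : IntegrableOn f (Icc a b) :=
    (continuousOn_of_mem_modulusClass hω0 (hω_cont 0 self_mem_Ici) hf).integrableOn_Icc
  have hL (z : Fin n → ℝ) : IntegrableOn (LmethOR ω q e z) (Icc a b) :=
    integrableOn_LmethOR hω_cont z measure_Icc_lt_top.ne
  set τ := tauOR ω q e
  have hτW : τ ∈ W := tauOR_mem_modulusClass hω_mono hω_subadd _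
  have hAτ : IntegrableOn (volterraOp Γ a τ) (Icc a b) := integrableOn_volterraOp hΓ (hW hτW)
  have hmem (z : Fin n → ℝ) : MemLp (Φ₀ z) 1 μab :=
    memLp_one_iff_integrable.2 (integrableOn_volterraOp hΓ (hL z))
  have hup : Err Φ₀ ≤ eLpNorm (volterraOp Γ a τ) 1 μab :=
    iSup₂_le fun f hf => iSup₂_le fun z hz => eLpNorm_mono_ae_real <|
      ae_restrict_of_forall_mem measurableSet_Icc fun t ht =>
        abs_volterraOp_sub_le hΓ hΓnn (hW hf) (hL z) (hW hτW)
          (fun s hs => abs_sub_LmethOR_le hq hf hz hs) ht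
  have hlow (Φ : (Fin n → ℝ) → ℝ → ℝ) (hΦ : AEStronglyMeasurable (Φ 0) μab) :
      eLpNorm (volterraOp Γ a τ) 1 μab ≤ Err Φ :=
    eLpNorm_le_recoveryError volterraOp_neg hτW (neg_mem_modulusClass hτW)
      (abs_tauOR_node_le hω0 he hω_nonneg) hAτ.aestronglyMeasurable hΦ
  have hopt : Err Φ₀ = eLpNorm (volterraOp Γ a τ) 1 μab := le_antisymm hup (hlow _ (hmem 0).1)
  refine ⟨le_antisymm (iInf_le_of_le ⟨Φ₀, hmem⟩ le_rfl)
    (le_iInf fun Φ => hopt ▸ hlow Φ.1 (Φ.2 0).1), ?_⟩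
  rw [hopt, eLpNorm_one_restrict_Icc_of_nonneg hab hAτ
    fun t ht => volterraOp_nonneg hΓnn ht.1 fun s _ => tauOR_nonneg he hω_nonneg s,
    integral_volterraOp hΓ hab (hW hτW)]

/-- Optimal recovery of the solution operator of a linear Volterra integral equation of
the second kind in `L¹`. -/
theorem optimal_recovery_volterra
    (a b : ℝ) (hab : a ≤ b)
    (k : ℝ → ℝ → ℝ) (hk_cont : Continuous fun p : ℝ × ℝ => k p.1 p.2)
    (hk_nonneg : ∀ t s, 0 ≤ k t s)
    (ω : ℝ → ℝ) (hω0 : ω 0 = 0)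
    (hω_cont : ContinuousOn ω (Set.Ici 0))
    (hω_mono : MonotoneOn ω (Set.Ici 0))
    (hω_subadd : ∀ s t : ℝ, 0 ≤ s → 0 ≤ t → ω (s + t) ≤ ω s + ω t)
    (hω_nonneg : ∀ s : ℝ, 0 ≤ s → 0 ≤ ω s)
    {n : ℕ} (hn : 0 < n) (q : Fin n → ℝ) (hq : ∀ j, q j ∈ Set.Icc a b)
    (e : Fin n → ℝ) (he : ∀ j, 0 ≤ e j) :
    let Γ : ℝ → ℝ → ℝ := volterraResolvent k
    -- the solution operator of the Volterra equation `x(t) = f(t) + ∫_a^t k(t,s) x(s) ds`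
    let A : (ℝ → ℝ) → ℝ → ℝ := fun f t => f t + ∫ s in a..t, Γ t s * f s
    let W : Set (ℝ → ℝ) :=
      {x | ∀ t ∈ Set.Icc a b, ∀ t' ∈ Set.Icc a b, |x t - x t'| ≤ ω (dist t t')}
    let μab : Measure ℝ := volume.restrict (Set.Icc a b)
    let Err : ((Fin n → ℝ) → ℝ → ℝ) → ℝ≥0∞ := fun Φ =>
      ⨆ f ∈ W, ⨆ z : Fin n → ℝ, ⨆ (_ : ∀ j, |z j - f (q j)| ≤ e j),
        eLpNorm (fun t => A f t - Φ z t) 1 μab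
    let Φ₀ : (Fin n → ℝ) → ℝ → ℝ := fun z => A (LmethOR ω q e z)
    (⨅ Φ : {Φ : (Fin n → ℝ) → ℝ → ℝ // ∀ z, MemLp (Φ z) 1 μab}, Err Φ.1) = Err Φ₀ ∧
      Err Φ₀ = ENNReal.ofReal (∫ s in a..b, (1 + ∫ t in s..b, Γ t s) * tauOR ω q e s) :=
  optimal_recovery_volterra_general a b k hk_cont hk_nonneg ω hω0 hω_cont hω_mono hω_subadd hn q hq
    e he
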